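/- arXiv:2210.16778 — 6 statements merged into one kernel-verified Lean document; each statement's English description precedes it below -/
import Mathlib

section
/- Let K be a convex body in R^n with origin in its interior, λ a Borel measure on S^{n-1} such that the Gauss image measure λ(K,·), defined by λ(K,ω) = λ(α_K(ω)), is a Borel measure. Then λ(K,·) is weak Aleksandrov related to λ: λ(K, S^{n-1}) = λ(S^{n-1}), and for each closed set ω ⊂ S^{n-1} contained in a closed hemisphere there exists α ∈ (0, π/2) with λ(K,ω) ≤ λ(ω_{π/2−α}). -/
open MeasureTheory Set Real
open scoped RealInnerProductSpace ENNReal NNReal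

noncomputable section

abbrev E (n : ℕ) := EuclideanSpace ℝ (Fin n)

/-- The unit sphere `S^{n-1} ⊂ ℝ^n`. -/
def uSphere (n : ℕ) : Set (E n) := Metric.sphere 0 1

/-- The radial function `ρ_K(u) = max {a ≥ 0 : a • u ∈ K}`. -/
def radialFn {n : ℕ} (K : Set (E n)) (u : E n) : ℝ :=
  sSup {a : ℝ | 0 ≤ a ∧ a • u ∈ K}

/-- The normal cone of `K` at a boundary point `x` (unit outer normals). -/
def normalCone {n : ℕ} (K : Set (E n)) (x : E n) : Set (E n) :=
  {v ∈ uSphere n | ∀ y ∈ K, ⟪y - x, v⟫ ≤ 0}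

/-- The radial Gauss image `α_K(ω) = ⋃_{u ∈ ω} N(K, ρ_K(u) u)`. -/
def rGauss {n : ℕ} (K : Set (E n)) (ω : Set (E n)) : Set (E n) :=
  ⋃ u ∈ ω, normalCone K (radialFn K u • u)

/-- Inner radius: radius of the largest origin-centered ball contained in `K`. -/
def inRad {n : ℕ} (K : Set (E n)) : ℝ :=
  sSup {r : ℝ | Metric.closedBall (0 : E n) r ⊆ K}

/-- Outer radius: radius of the smallest origin-centered ball containing `K`. -/
def outRad {n : ℕ} (K : Set (E n)) : ℝ :=
  sInf {R : ℝ | K ⊆ Metric.closedBall (0 : E n) R}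

/-- A convex body with the origin in its interior. -/
def IsConvexBody0 {n : ℕ} (K : Set (E n)) : Prop :=
  Convex ℝ K ∧ IsCompact K ∧ (0 : E n) ∈ interior K

/-- The polar body `K* = {x : ⟨x,y⟩ ≤ 1 for all y ∈ K}`. -/
def polarBody {n : ℕ} (K : Set (E n)) : Set (E n) :=
  {x : E n | ∀ y ∈ K, ⟪x, y⟫ ≤ 1}

/-- The outer parallel set `ω_β = ⋃_{u ∈ ω} {v ∈ S^{n-1} : ⟨u,v⟩ > cos β}`. -/
def outerPar {n : ℕ} (ω : Set (E n)) (β : ℝ) : Set (E n) :=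
  ⋃ u ∈ ω, {v ∈ uSphere n | ⟪u, v⟫ > Real.cos β}

/-- The polar set `ω* = {v ∈ S^{n-1} : ⟨u,v⟩ ≤ 0 for all u ∈ ω}`. -/
def polarSet {n : ℕ} (ω : Set (E n)) : Set (E n) :=
  {v ∈ uSphere n | ∀ u ∈ ω, ⟪u, v⟫ ≤ 0}

/-- `ω` is contained in a closed hemisphere. -/
def InHemisphere {n : ℕ} (ω : Set (E n)) : Prop :=
  ∃ e ∈ uSphere n, ∀ u ∈ ω, 0 ≤ ⟪e, u⟫

/-- Spherical Lebesgue measure: the `(n-1)`-dimensional Hausdorff measure on the sphere. -/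
def sphLeb (n : ℕ) : Measure (E n) :=
  (μH[(n : ℝ) - 1] : Measure (E n)).restrict (uSphere n)

/-- `μ` is weak Aleksandrov related to `lam`. -/
def WeakAleksandrov {n : ℕ} (μ lam : Measure (E n)) : Prop :=
  μ (uSphere n) = lam (uSphere n) ∧
  ∀ ω : Set (E n), ω ⊆ uSphere n → IsClosed ω → InHemisphere ω →
    ∃ α ∈ Ioo (0 : ℝ) (π / 2), μ ω ≤ lam (outerPar ω (π / 2 - α))

/-- The closed half-space `H^-(α, v) = {x : ⟨x,v⟩ ≤ α}`. -/
def Hminus {n : ℕ} (α : ℝ) (v : E n) : Set (E n) := {x : E n | ⟪x, v⟫ ≤ α}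

/-- The cone generated by `ω`. -/
def coneOf {n : ℕ} (ω : Set (E n)) : Set (E n) :=
  {x : E n | ∃ t : ℝ, 0 ≤ t ∧ ∃ u ∈ ω, x = t • u}

/-- `ω` is spherically convex. -/
def SphericallyConvex {n : ℕ} (ω : Set (E n)) : Prop :=
  (coneOf ω).Nonempty ∧ coneOf ω ≠ univ ∧ Convex ℝ (coneOf ω)

/-- The functional `Φ(K) = ∫ log ρ_K dμ + ∫ log ρ_{K*} dλ`. -/
def Phi {n : ℕ} (K : Set (E n)) (μ lam : Measure (E n)) : ℝ :=
  (∫ u, Real.log (radialFn K u) ∂μ) + ∫ u, Real.log (radialFn (polarBody K) u) ∂lam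

/-- if `μ = λ(K, ·)` is the Gauss image measure of `K ∈ K^n_o` (a Borel
measure), with `λ` a Borel measure concentrated on the sphere, then `μ` is weak
Aleksandrov related to `λ`. -/
theorem stmt2 {n : ℕ} (K : Set (E n)) (hK : IsConvexBody0 K)
    (lam μ : Measure (E n)) (hsupp : lam (uSphere n)ᶜ = 0)
    (hμ : ∀ ω : Set (E n), ω ⊆ uSphere n → μ ω = lam (rGauss K ω)) :
    WeakAleksandrov μ lam := by
  obtain ⟨hconv, hcomp, h0⟩ := hK
  -- an inner radius r
  obtain ⟨ε, hε, hball⟩ := Metric.isOpen_iff.mp isOpen_interior 0 h0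
  set r : ℝ := ε / 2 with hrdef
  have hr0 : 0 < r := half_pos hε
  have hrK : Metric.closedBall (0 : E n) r ⊆ K := fun x hx =>
    interior_subset (hball (lt_of_le_of_lt (Metric.mem_closedBall.mp hx) (half_lt_self hε)))
  -- an outer radius R
  obtain ⟨R0, hR0K⟩ := hcomp.isBounded.subset_closedBall 0
  set R : ℝ := max R0 r with hRdef
  have hR0 : 0 < R := lt_of_lt_of_le hr0 (le_max_right _ _)
  have hRK : K ⊆ Metric.closedBall (0 : E n) R :=
    hR0K.trans (Metric.closedBall_subset_closedBall (le_max_left _ _))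
  have hrR : r ≤ R := le_max_right _ _
  -- `r • v ∈ K` for unit `v`
  have hrmem : ∀ v : E n, ‖v‖ = 1 → r • v ∈ K := by
    intro v hv
    apply hrK
    rw [mem_closedBall_zero_iff, norm_smul, hv, mul_one]
    exact le_of_eq (abs_of_nonneg hr0.le)
  -- radial function bounds for unit vectors
  have hρub : ∀ u : E n, ‖u‖ = 1 → ∀ a ∈ {a : ℝ | 0 ≤ a ∧ a • u ∈ K}, a ≤ R := by
    rintro u hu a ⟨ha0, haK⟩
    have := hRK haK
    rw [mem_closedBall_zero_iff, norm_smul, hu, mul_one, Real.norm_of_nonneg ha0] at this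
    exact this
  have hρr : ∀ u : E n, ‖u‖ = 1 → r ≤ radialFn K u := by
    intro u hu
    exact le_csSup ⟨R, hρub u hu⟩ ⟨hr0.le, hrmem u hu⟩
  have hρR : ∀ u : E n, ‖u‖ = 1 → radialFn K u ≤ R := by
    intro u hu
    exact csSup_le ⟨r, hr0.le, hrmem u hu⟩ (hρub u hu)
  constructor
  · -- total mass equality
    rw [hμ _ subset_rfl]
    congr 1
    apply Subset.antisymm
    · rintro v hv
      simp only [rGauss, mem_iUnion] at hv
      obtain ⟨u, hu, hv⟩ := hv
      exact hv.1
    · intro v hv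
      have hv1 : ‖v‖ = 1 := mem_sphere_zero_iff_norm.mp hv
      obtain ⟨x, hxK, hmax⟩ := hcomp.exists_isMaxOn ⟨0, interior_subset h0⟩
        ((continuous_id.inner continuous_const).continuousOn (f := fun y : E n => ⟪y, v⟫))
      have hrv : r • v ∈ K := hrmem v hv1
      have hxv : r ≤ ⟪x, v⟫ := by
        have h : ⟪r • v, v⟫ ≤ ⟪x, v⟫ := hmax hrv
        simp only [real_inner_smul_left] at h
        rw [real_inner_self_eq_norm_sq, hv1] at h
        simpa using h
      have hxn : 0 < ‖x‖ := by
        rcases eq_or_ne x 0 with h | h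
        · exfalso; rw [h, inner_zero_left] at hxv; linarith
        · exact norm_pos_iff.mpr h
      set u : E n := ‖x‖⁻¹ • x with hudef
      have hu1 : ‖u‖ = 1 := by
        rw [hudef, norm_smul, norm_inv, norm_norm, inv_mul_cancel₀ hxn.ne']
      have huS : u ∈ uSphere n := mem_sphere_zero_iff_norm.mpr hu1
      have hxu : ‖x‖ • u = x := smul_inv_smul₀ hxn.ne' x
      have huv : 0 < ⟪u, v⟫ := by
        rw [hudef, real_inner_smul_left]
        exact mul_pos (inv_pos.mpr hxn) (lt_of_lt_of_le hr0 hxv)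
      have hρ : radialFn K u = ‖x‖ := by
        apply IsGreatest.csSup_eq
        constructor
        · exact ⟨hxn.le, by rw [hxu]; exact hxK⟩
        · rintro a ⟨ha0, haK⟩
          have h : ⟪a • u, v⟫ ≤ ⟪x, v⟫ := hmax haK
          rw [real_inner_smul_left] at h
          have hxveq : ⟪x, v⟫ = ‖x‖ * ⟪u, v⟫ := by
            rw [← hxu, real_inner_smul_left, hxu]
          nlinarith
      simp only [rGauss, mem_iUnion]
      refine ⟨u, huS, ?_⟩
      rw [hρ, hxu]
      refine ⟨hv, fun y hy => ?_⟩
      rw [inner_sub_left, sub_nonpos]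
      exact hmax hy
  · -- weak Aleksandrov inequality
    intro ω hωS _ _
    have ht0 : 0 < r / (2 * R) := by positivity
    have ht1 : r / (2 * R) < 1 := by
      rw [div_lt_one (by positivity)]
      linarith
    refine ⟨Real.arcsin (r / (2 * R)),
      ⟨Real.arcsin_pos.mpr ht0, Real.arcsin_lt_pi_div_two.mpr ht1⟩, ?_⟩
    rw [hμ ω hωS]
    apply measure_mono
    rintro v hv
    simp only [rGauss, mem_iUnion] at hv
    obtain ⟨u, huω, hvS, hvN⟩ := hv
    have hu1 : ‖u‖ = 1 := mem_sphere_zero_iff_norm.mp (hωS huω)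
    have hv1 : ‖v‖ = 1 := mem_sphere_zero_iff_norm.mp hvS
    set ρ : ℝ := radialFn K u with hρdef
    have hρ1 : r ≤ ρ := hρr u hu1
    have hρ2 : ρ ≤ R := hρR u hu1
    have hkey : r ≤ ρ * ⟪u, v⟫ := by
      have h := hvN (r • v) (hrmem v hv1)
      rw [inner_sub_left, real_inner_smul_left, real_inner_smul_left,
        real_inner_self_eq_norm_sq, hv1] at h
      nlinarith
    have hip0 : 0 < ⟪u, v⟫ := by nlinarith
    have hrRip : r / R ≤ ⟪u, v⟫ := by
      rw [div_le_iff₀ hR0]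
      nlinarith
    have hlt : r / (2 * R) < ⟪u, v⟫ := by
      have : r / (2 * R) < r / R := by
        apply div_lt_div_of_pos_left hr0 hR0
        linarith
      linarith
    simp only [outerPar, mem_iUnion]
    refine ⟨u, huω, hvS, ?_⟩
    rw [Real.cos_pi_div_two_sub, Real.sin_arcsin (by linarith) ht1.le]
    exact hlt
end
end

section
/- Suppose μ = Σ_{i=1}^m μ_i δ_{v_i} is a discrete Borel measure on S^{n-1} that is weak Aleksandrov related to a Borel measure λ. Then there exists a single uniform constant α ∈ (0, π/2) such that for every closed set ω ⊂ S^{n-1} contained in a closed hemisphere, μ(ω) ≤ λ(ω_{π/2−α}). -/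
open MeasureTheory Set Real
open scoped RealInnerProductSpace ENNReal NNReal

noncomputable section

/-- for a discrete measure `μ = Σ μ_i δ_{v_i}` weak Aleksandrov related
to `λ`, there is a single uniform constant `α ∈ (0, π/2)` working for all closed sets
contained in a closed hemisphere. -/
theorem stmt3 {n m : ℕ} (v : Fin m → E n) (hv : ∀ i, v i ∈ uSphere n)
    (μw : Fin m → ℝ≥0) (hμw : ∀ i, 0 < μw i)
    (lam : Measure (E n))
    (hWA : WeakAleksandrov (∑ i, (μw i : ℝ≥0∞) • Measure.dirac (v i)) lam) :
    ∃ α ∈ Ioo (0 : ℝ) (π / 2),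
      ∀ ω : Set (E n), ω ⊆ uSphere n → IsClosed ω → InHemisphere ω →
        (∑ i, (μw i : ℝ≥0∞) • Measure.dirac (v i)) ω ≤ lam (outerPar ω (π / 2 - α)) := by
  classical
  set μ : Measure (E n) := ∑ i, (μw i : ℝ≥0∞) • Measure.dirac (v i) with hμdef
  have happly : ∀ ω : Set (E n), μ ω = ∑ i, if v i ∈ ω then (μw i : ℝ≥0∞) else 0 := by
    intro ω
    simp [hμdef, Measure.finset_sum_apply, Measure.smul_apply, Measure.dirac_apply,
      Set.indicator_apply, smul_eq_mul, mul_ite, mul_one, mul_zero]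
  have hchoice : ∀ S : Finset (Fin m), ∃ α ∈ Ioo (0 : ℝ) (π / 2),
      InHemisphere (v '' ↑S) → μ (v '' ↑S) ≤ lam (outerPar (v '' ↑S) (π / 2 - α)) := by
    intro S
    by_cases h : InHemisphere (v '' ↑S)
    · obtain ⟨α, hα, hle⟩ := hWA.2 (v '' ↑S)
        (by rintro x ⟨i, -, rfl⟩; exact hv i)
        ((S.finite_toSet.image v).isClosed) h
      exact ⟨α, hα, fun _ => hle⟩
    · exact ⟨π / 4, ⟨by positivity, by linarith [pi_pos]⟩, fun h' => absurd h' h⟩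
  choose f hf1 hf2 using hchoice
  set α : ℝ := Finset.univ.inf' Finset.univ_nonempty f with hαdef
  have hα0 : 0 < α := by
    rw [hαdef, Finset.lt_inf'_iff]
    exact fun S _ => (hf1 S).1
  have hαtop : α < π / 2 :=
    lt_of_le_of_lt (Finset.inf'_le f (Finset.mem_univ ∅)) (hf1 ∅).2
  refine ⟨α, ⟨hα0, hαtop⟩, ?_⟩
  intro ω hωsub hωclosed hωhemi
  set S : Finset (Fin m) := Finset.univ.filter (fun i => v i ∈ ω) with hS
  have hsub : v '' ↑S ⊆ ω := by
    rintro x ⟨i, hi, rfl⟩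
    simpa [hS] using hi
  have hμeq : μ ω = μ (v '' ↑S) := by
    rw [happly, happly]
    refine Finset.sum_congr rfl fun i _ => ?_
    have : v i ∈ v '' ↑S ↔ v i ∈ ω :=
      ⟨fun h => hsub h, fun h => ⟨i, by simp [hS, h], rfl⟩⟩
    simp [this]
  have hhemi : InHemisphere (v '' ↑S) := by
    obtain ⟨e, he, hpos⟩ := hωhemi
    exact ⟨e, he, fun u hu => hpos u (hsub hu)⟩
  have hαle : α ≤ f S := Finset.inf'_le f (Finset.mem_univ S)
  have hOP : outerPar (v '' ↑S) (π / 2 - f S) ⊆ outerPar ω (π / 2 - α) := by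
    intro x hx
    simp only [outerPar, mem_iUnion, mem_setOf_eq] at hx ⊢
    obtain ⟨u, hu, hxs, hip⟩ := hx
    refine ⟨u, hsub hu, hxs, lt_of_le_of_lt ?_ hip⟩
    apply Real.cos_le_cos_of_nonneg_of_le_pi
    · linarith [(hf1 S).2]
    · linarith [pi_pos]
    · linarith
  calc μ ω = μ (v '' ↑S) := hμeq
    _ ≤ lam (outerPar (v '' ↑S) (π / 2 - f S)) := hf2 S hhemi
    _ ≤ lam (outerPar ω (π / 2 - α)) := measure_mono hOP
end
end

section
/- If Borel measures μ and λ on S^{n-1} are Aleksandrov related (i.e., λ(S^{n-1}) = μ(S^{n-1}) > μ(ω) + λ(ω*) for each compact, spherically convex set ω ⊂ S^{n-1}), then μ is weak Aleksandrov related to λ. -/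
open MeasureTheory Set Real
open scoped RealInnerProductSpace ENNReal NNReal

noncomputable section

open scoped Pointwise

namespace Stmt4Aux

variable {n : ℕ}

lemma mem_uSphere_iff {x : E n} : x ∈ uSphere n ↔ ‖x‖ = 1 := by
  simp [uSphere]

lemma coneOf_inter_sphere (F : Set (E n))
    (hsmul : ∀ (t : ℝ), 0 ≤ t → ∀ x ∈ F, t • x ∈ F)
    (hne : ∃ x ∈ F, x ≠ 0) :
    coneOf (F ∩ uSphere n) = F := by
  obtain ⟨x₀, hx₀F, hx₀⟩ := hne
  have hu : ∀ x ∈ F, x ≠ 0 → ‖x‖⁻¹ • x ∈ F ∩ uSphere n := by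
    intro x hx hx0
    refine ⟨hsmul _ (by positivity) x hx, mem_uSphere_iff.2 ?_⟩
    rw [norm_smul, norm_inv, norm_norm, inv_mul_cancel₀ (norm_ne_zero_iff.2 hx0)]
  ext x
  constructor
  · rintro ⟨t, ht, u, ⟨huF, -⟩, rfl⟩
    exact hsmul t ht u huF
  · intro hx
    by_cases h0 : x = 0
    · exact ⟨0, le_refl 0, _, hu x₀ hx₀F hx₀, by simp [h0]⟩
    · refine ⟨‖x‖, norm_nonneg x, _, hu x hx h0, ?_⟩
      rw [smul_smul, mul_inv_cancel₀ (norm_ne_zero_iff.2 h0), one_smul]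

lemma halfspace_closed (e : E n) : IsClosed {x : E n | 0 ≤ ⟪e, x⟫} :=
  isClosed_le continuous_const (continuous_const.inner continuous_id)

lemma halfspace_convex (e : E n) : Convex ℝ {x : E n | 0 ≤ ⟪e, x⟫} := by
  intro x hx y hy a b ha hb _
  simp only [mem_setOf_eq, inner_add_right, real_inner_smul_right] at *
  have := mul_nonneg ha hx
  have := mul_nonneg hb hy
  linarith

lemma halfspace_smul (e : E n) :
    ∀ (t : ℝ), 0 ≤ t → ∀ x ∈ {x : E n | 0 ≤ ⟪e, x⟫}, t • x ∈ {x : E n | 0 ≤ ⟪e, x⟫} := by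
  intro t ht x hx
  simp only [mem_setOf_eq, real_inner_smul_right] at *
  exact mul_nonneg ht hx

lemma halfspace_ne_univ {e : E n} (he : e ∈ uSphere n) :
    {x : E n | 0 ≤ ⟪e, x⟫} ≠ univ := by
  intro h
  have h1 : -e ∈ {x : E n | 0 ≤ ⟪e, x⟫} := h ▸ mem_univ _
  have h2 : ⟪e, e⟫ = 1 := by
    rw [real_inner_self_eq_norm_sq, mem_uSphere_iff.1 he]; norm_num
  simp only [mem_setOf_eq, inner_neg_right, h2] at h1
  linarith

lemma hemi_compact (e : E n) : IsCompact ({x : E n | 0 ≤ ⟪e, x⟫} ∩ uSphere n) :=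
  (isCompact_sphere (0 : E n) 1).of_isClosed_subset
    ((halfspace_closed e).inter Metric.isClosed_sphere) inter_subset_right

lemma hemi_sphConvex {e : E n} (he : e ∈ uSphere n) :
    SphericallyConvex ({x : E n | 0 ≤ ⟪e, x⟫} ∩ uSphere n) := by
  have hne : ∃ x ∈ {x : E n | 0 ≤ ⟪e, x⟫}, x ≠ (0 : E n) := by
    refine ⟨e, ?_, ?_⟩
    · simp only [mem_setOf_eq, real_inner_self_eq_norm_sq, mem_uSphere_iff.1 he]; norm_num
    · intro h
      have := mem_uSphere_iff.1 he
      rw [h] at this; simp at this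
  rw [SphericallyConvex, coneOf_inter_sphere _ (halfspace_smul e) hne]
  exact ⟨⟨0, by simp⟩, halfspace_ne_univ he, halfspace_convex e⟩

/-- The total mass of `μ` is finite under the Aleksandrov relation. -/
lemma mass_finite {μ lam : Measure (E n)}
    (hA : ∀ ω : Set (E n), ω ⊆ uSphere n → IsCompact ω → SphericallyConvex ω →
      μ ω + lam (polarSet ω) < μ (uSphere n))
    {e : E n} (he : e ∈ uSphere n) : μ (uSphere n) ≠ ∞ := by
  intro htop
  have hem : -e ∈ uSphere n := by
    rw [mem_uSphere_iff, norm_neg]; exact mem_uSphere_iff.1 he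
  have h1 := hA _ inter_subset_right (hemi_compact e) (hemi_sphConvex he)
  have h2 := hA _ inter_subset_right (hemi_compact (-e)) (hemi_sphConvex hem)
  rw [htop] at h1 h2
  have hf1 : μ ({x : E n | 0 ≤ ⟪e, x⟫} ∩ uSphere n) ≠ ∞ :=
    (lt_of_le_of_lt le_self_add h1).ne
  have hf2 : μ ({x : E n | 0 ≤ ⟪-e, x⟫} ∩ uSphere n) ≠ ∞ :=
    (lt_of_le_of_lt le_self_add h2).ne
  have hcover : uSphere n ⊆
      ({x : E n | 0 ≤ ⟪e, x⟫} ∩ uSphere n) ∪ ({x : E n | 0 ≤ ⟪-e, x⟫} ∩ uSphere n) := by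
    intro v hv
    rcases le_total 0 ⟪e, v⟫ with h | h
    · exact Or.inl ⟨h, hv⟩
    · exact Or.inr ⟨by simpa using neg_nonneg.2 h, hv⟩
  have : μ (uSphere n) ≠ ∞ := by
    have hle : μ (uSphere n) ≤ μ ({x : E n | 0 ≤ ⟪e, x⟫} ∩ uSphere n)
        + μ ({x : E n | 0 ≤ ⟪-e, x⟫} ∩ uSphere n) :=
      (measure_mono hcover).trans (measure_union_le _ _)
    exact ne_top_of_le_ne_top (ENNReal.add_ne_top.2 ⟨hf1, hf2⟩) hle
  exact this htop

end Stmt4Aux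

/-- if `μ` and `λ` are Aleksandrov related (equal total mass on the
sphere and `μ(ω) + λ(ω*) < μ(S^{n-1})` for every compact spherically convex `ω`),
then `μ` is weak Aleksandrov related to `λ`. -/
theorem stmt4 {n : ℕ} (μ lam : Measure (E n))
    (hmass : lam (uSphere n) = μ (uSphere n))
    (hA : ∀ ω : Set (E n), ω ⊆ uSphere n → IsCompact ω → SphericallyConvex ω →
      μ ω + lam (polarSet ω) < μ (uSphere n)) :
    WeakAleksandrov μ lam := by
  classical
  refine ⟨hmass.symm, ?_⟩
  rintro ω hωS hωcl ⟨e, heS, hem⟩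
  rcases ω.eq_empty_or_nonempty with rfl | ⟨u₀, hu₀⟩
  · refine ⟨π / 4, ⟨by positivity, by linarith [Real.pi_pos]⟩, ?_⟩
    rw [measure_empty]
    exact zero_le
  by_contra hcon
  push_neg at hcon
  -- total masses are finite
  have hμfin : μ (uSphere n) ≠ ∞ := Stmt4Aux.mass_finite hA heS
  have hlamfin : lam (uSphere n) ≠ ∞ := by rw [hmass]; exact hμfin
  -- the sequence of angles
  set α : ℕ → ℝ := fun k => π / (2 * ((k : ℝ) + 2)) with hα
  have hα0 : ∀ k, 0 < α k := by
    intro k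
    have : (0:ℝ) < 2 * ((k : ℝ) + 2) := by positivity
    exact div_pos Real.pi_pos this
  have hαlt : ∀ k, α k < π / 2 := by
    intro k
    rw [hα, div_lt_div_iff₀ (by positivity) (by norm_num : (0:ℝ) < 2)]
    nlinarith [Real.pi_pos, (Nat.cast_nonneg k : (0:ℝ) ≤ (k : ℝ))]
  have hαanti : ∀ k l : ℕ, k ≤ l → α l ≤ α k := by
    intro k l hkl
    have hkl' : (k : ℝ) ≤ (l : ℝ) := Nat.cast_le.2 hkl
    exact div_le_div_of_nonneg_left Real.pi_pos.le (by positivity) (by linarith)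
  -- membership in outerPar
  have houter : ∀ (β : ℝ) (v : E n),
      v ∈ outerPar ω β ↔ ∃ u ∈ ω, v ∈ uSphere n ∧ Real.cos β < ⟪u, v⟫ := by
    intro β v
    simp only [outerPar, mem_iUnion, mem_sep_iff, gt_iff_lt, exists_prop]
  have hcos : ∀ k, Real.cos (π / 2 - α k) = Real.sin (α k) := fun k =>
    Real.cos_pi_div_two_sub (α k)
  -- the decreasing family
  set A : ℕ → Set (E n) := fun k => uSphere n \ outerPar ω (π / 2 - α k) with hAdef
  have hmeasA : ∀ k, MeasurableSet (A k) := by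
    intro k
    apply (Metric.isClosed_sphere.measurableSet).diff
    have : outerPar ω (π / 2 - α k)
        = uSphere n ∩ ⋃ u ∈ ω, {v : E n | Real.cos (π / 2 - α k) < ⟪u, v⟫} := by
      ext v
      simp only [houter, mem_inter_iff, mem_iUnion, mem_setOf_eq, exists_prop]
      tauto
    rw [this]
    exact Metric.isClosed_sphere.measurableSet.inter
      (isOpen_biUnion fun u _ =>
        isOpen_lt continuous_const (continuous_const.inner continuous_id)).measurableSet
  have hantiA : Antitone A := by
    intro k l hkl v hv
    refine ⟨hv.1, fun hmem => hv.2 ?_⟩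
    rw [houter] at hmem ⊢
    obtain ⟨u, hu, hvS, hlt⟩ := hmem
    refine ⟨u, hu, hvS, lt_of_le_of_lt ?_ hlt⟩
    rw [hcos, hcos]
    exact Real.strictMonoOn_sin.monotoneOn
      ⟨by linarith [hα0 l, Real.pi_pos], (hαlt l).le⟩
      ⟨by linarith [hα0 k, Real.pi_pos], (hαlt k).le⟩ (hαanti k l hkl)
  have hinter : (⋂ k, A k) = polarSet ω := by
    ext v
    simp only [mem_iInter, hAdef, mem_diff, polarSet, mem_sep_iff]
    constructor
    · intro h
      have hvS : v ∈ uSphere n := (h 0).1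
      refine ⟨hvS, fun u hu => ?_⟩
      by_contra hpos
      push_neg at hpos
      obtain ⟨N, hN⟩ := exists_nat_gt (π / (2 * ⟪u, v⟫))
      have hkey : α N < ⟪u, v⟫ := by
        rw [hα]
        rw [div_lt_iff₀ (by positivity)] at hN ⊢
        nlinarith [Real.pi_pos]
      have := (h N).2
      rw [houter] at this
      push_neg at this
      have hle := this u hu hvS
      have hsin : Real.sin (α N) ≤ α N := Real.sin_le (hα0 N).le
      rw [hcos] at hle
      linarith
    · rintro ⟨hvS, h⟩ k
      refine ⟨hvS, fun hmem => ?_⟩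
      rw [houter] at hmem
      obtain ⟨u, hu, -, hlt⟩ := hmem
      have hsin : 0 < Real.sin (α k) :=
        Real.sin_pos_of_pos_of_lt_pi (hα0 k) (by linarith [hαlt k, Real.pi_pos])
      rw [hcos] at hlt
      linarith [h u hu]
  -- continuity from above
  have hiInf : lam (polarSet ω) = ⨅ k, lam (A k) := by
    rw [← hinter]
    refine Directed.measure_iInter (fun k => (hmeasA k).nullMeasurableSet)
      (hantiA.directed_ge) ⟨0, ?_⟩
    exact ne_top_of_le_ne_top hlamfin (measure_mono diff_subset)
  -- the key inequality : lam S ≤ lam (polarSet ω) + μ ω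
  have hkey : lam (uSphere n) ≤ lam (polarSet ω) + μ ω := by
    rw [hiInf, ENNReal.iInf_add]
    refine le_iInf fun k => ?_
    have hsub : uSphere n ⊆ A k ∪ outerPar ω (π / 2 - α k) := by
      intro v hv
      by_cases hv' : v ∈ outerPar ω (π / 2 - α k)
      · exact Or.inr hv'
      · exact Or.inl ⟨hv, hv'⟩
    calc lam (uSphere n) ≤ lam (A k) + lam (outerPar ω (π / 2 - α k)) :=
          (measure_mono hsub).trans (measure_union_le _ _)
      _ ≤ lam (A k) + μ ω :=
          add_le_add_right (hcon (α k) ⟨hα0 k, hαlt k⟩).le _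
  -- construct the compact spherically convex set containing ω
  set D : Set (E n) := closure (convexHull ℝ (coneOf ω)) with hD
  have hConsmul : ∀ (t : ℝ), 0 ≤ t → ∀ x ∈ coneOf ω, t • x ∈ coneOf ω := by
    rintro t ht x ⟨s, hs, u, hu, rfl⟩
    exact ⟨t * s, mul_nonneg ht hs, u, hu, smul_smul t s u⟩
  have hCsmul : ∀ (t : ℝ), 0 ≤ t → ∀ x ∈ convexHull ℝ (coneOf ω),
      t • x ∈ convexHull ℝ (coneOf ω) := by
    intro t ht x hx
    have h1 : t • x ∈ t • convexHull ℝ (coneOf ω) := smul_mem_smul_set hx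
    rw [← convexHull_smul t (coneOf ω)] at h1
    refine convexHull_mono ?_ h1
    rintro y ⟨z, hz, rfl⟩
    exact hConsmul t ht z hz
  have hDsmul : ∀ (t : ℝ), 0 ≤ t → ∀ x ∈ D, t • x ∈ D := by
    intro t ht x hx
    have h1 : t • x ∈ (fun y : E n => t • y) '' (closure (convexHull ℝ (coneOf ω))) :=
      mem_image_of_mem _ hx
    have h2 := (image_closure_subset_closure_image (continuous_const_smul t)) h1
    refine closure_mono ?_ h2
    rintro y ⟨z, hz, rfl⟩
    exact hCsmul t ht z hz
  have hωCon : ω ⊆ coneOf ω := fun u hu => ⟨1, zero_le_one, u, hu, (one_smul ℝ u).symm⟩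
  have hConD : coneOf ω ⊆ D := (subset_convexHull ℝ _).trans subset_closure
  have hu₀D : u₀ ∈ D := hConD (hωCon hu₀)
  have hu₀ne : u₀ ≠ 0 := by
    intro h
    have := Stmt4Aux.mem_uSphere_iff.1 (hωS hu₀)
    rw [h] at this; simp at this
  have hDcone : coneOf (D ∩ uSphere n) = D :=
    Stmt4Aux.coneOf_inter_sphere D hDsmul ⟨u₀, hu₀D, hu₀ne⟩
  have hDhalf : D ⊆ {x : E n | 0 ≤ ⟪e, x⟫} := by
    apply closure_minimal _ (Stmt4Aux.halfspace_closed e)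
    apply convexHull_min _ (Stmt4Aux.halfspace_convex e)
    rintro x ⟨t, ht, u, hu, rfl⟩
    simp only [mem_setOf_eq, real_inner_smul_right]
    exact mul_nonneg ht (hem u hu)
  have hDne : D ≠ univ := by
    intro h
    have h1 : -e ∈ D := h ▸ mem_univ _
    have h2 : ⟪e, e⟫ = 1 := by
      rw [real_inner_self_eq_norm_sq, Stmt4Aux.mem_uSphere_iff.1 heS]; norm_num
    have := hDhalf h1
    simp only [mem_setOf_eq, inner_neg_right, h2] at this
    linarith
  have hWsph : SphericallyConvex (D ∩ uSphere n) := by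
    rw [SphericallyConvex, hDcone]
    exact ⟨⟨u₀, hu₀D⟩, hDne, (convex_convexHull ℝ _).closure⟩
  have hWcpt : IsCompact (D ∩ uSphere n) :=
    (isCompact_sphere (0 : E n) 1).of_isClosed_subset
      (isClosed_closure.inter Metric.isClosed_sphere) inter_subset_right
  have hωW : ω ⊆ D ∩ uSphere n := fun u hu => ⟨hConD (hωCon hu), hωS hu⟩
  have hpolar : polarSet ω ⊆ polarSet (D ∩ uSphere n) := by
    rintro v ⟨hvS, hv⟩
    refine ⟨hvS, fun u hu => ?_⟩
    have hcl : IsClosed {x : E n | ⟪x, v⟫ ≤ 0} := by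
      have hct : Continuous fun x : E n => ⟪x, v⟫ := continuous_id.inner continuous_const
      exact isClosed_le hct continuous_const
    have hconvHv : Convex ℝ {x : E n | ⟪x, v⟫ ≤ 0} := by
      intro x hx y hy a b ha hb _
      simp only [mem_setOf_eq] at hx hy ⊢
      rw [inner_add_left, real_inner_smul_left, real_inner_smul_left]
      nlinarith
    have hsub : D ⊆ {x : E n | ⟪x, v⟫ ≤ 0} := by
      apply closure_minimal _ hcl
      apply convexHull_min _ hconvHv
      rintro x ⟨t, ht, u', hu', rfl⟩
      simp only [mem_setOf_eq, real_inner_smul_left]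
      exact mul_nonpos_of_nonneg_of_nonpos ht (hv u' hu')
    exact hsub hu.1
  -- contradiction with the Aleksandrov relation
  have hcontra := hA (D ∩ uSphere n) inter_subset_right hWcpt hWsph
  have : μ (uSphere n) ≤ μ (D ∩ uSphere n) + lam (polarSet (D ∩ uSphere n)) := by
    calc μ (uSphere n) = lam (uSphere n) := hmass.symm
      _ ≤ lam (polarSet ω) + μ ω := hkey
      _ ≤ lam (polarSet (D ∩ uSphere n)) + μ (D ∩ uSphere n) :=
          add_le_add (measure_mono hpolar) (measure_mono hωW)
      _ = μ (D ∩ uSphere n) + lam (polarSet (D ∩ uSphere n)) := add_comm _ _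
  exact absurd hcontra this.not_gt
end
end

section
/- Let P* = ∩_{i=1}^m H^-(α_i, v_i) be a polytope with the v_i not concentrated on a closed hemisphere and α_i > 0. Let I ⊂ {1,…,m} be a nonempty proper indexing set, and set L = min_{i∈I} α_i, U* = max_{i∉I} α_i. If L > U*, then the union of caps ∪_{i∉I} (v_i)_{arccos(U*/L)} is contained in the radial Gauss image α_P(∪_{i∉I}{v_i}), where P = (P*)*. -/
open MeasureTheory Set Real
open scoped RealInnerProductSpace ENNReal NNReal

noncomputable section

/-- with `L = min_{i ∈ I} α_i > U* = max_{i ∉ I} α_i`, the union of caps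
`⋃_{i ∉ I} (v_i)_{arccos(U*/L)}` is contained in the radial Gauss image
`α_P(⋃_{i ∉ I} {v_i})` where `P = (P*)*`. -/
theorem stmt9 {n m : ℕ} (v : Fin m → E n) (hv : ∀ i, v i ∈ uSphere n)
    (hnc : ¬ InHemisphere (Set.range v))
    (α : Fin m → ℝ) (hα : ∀ i, 0 < α i)
    (I : Finset (Fin m)) (hIne : I.Nonempty) (hIc : Iᶜ.Nonempty) :
    I.inf' hIne α > Iᶜ.sup' hIc α →
    (⋃ i ∈ {j : Fin m | j ∉ I}, outerPar {v i} (Real.arccos (Iᶜ.sup' hIc α / I.inf' hIne α)))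
      ⊆ rGauss (polarBody (⋂ i, Hminus (α i) (v i))) (⋃ i ∈ {j : Fin m | j ∉ I}, {v i}) := by
  intro hLU u hu
  set L := I.inf' hIne α with hLdef
  set U := Iᶜ.sup' hIc α with hUdef
  obtain ⟨i0, hi0⟩ := hIc
  have hU0 : 0 < U := lt_of_lt_of_le (hα i0) (Finset.le_sup' α hi0)
  have hL0 : 0 < L := hU0.trans hLU
  simp only [Set.mem_iUnion, Set.mem_setOf_eq, outerPar, Set.mem_singleton_iff,
    exists_prop, exists_eq_left] at hu
  obtain ⟨i, hiI, huS, hui⟩ := hu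
  have hu1 : ‖u‖ = 1 := by simpa [uSphere, mem_sphere_zero_iff_norm] using huS
  have hvn : ∀ j, ‖v j‖ = 1 := fun j => by
    simpa [uSphere, mem_sphere_zero_iff_norm] using hv j
  have hui' : U / L < ⟪v i, u⟫ := by
    rwa [Real.cos_arccos (by nlinarith [div_pos hU0 hL0]) (by
      rw [div_le_one hL0]; exact hLU.le)] at hui
  have hUL : 0 < U / L := div_pos hU0 hL0
  have hCS : ∀ j, ⟪v j, u⟫ ≤ 1 := fun j => by
    have := real_inner_le_norm (v j) u
    rwa [hvn j, hu1, one_mul] at this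
  set J := Finset.univ.filter (fun j => 0 < ⟪v j, u⟫) with hJdef
  have hiJ : i ∈ J := Finset.mem_filter.mpr ⟨Finset.mem_univ _, hUL.trans hui'⟩
  obtain ⟨j0, hj0J, hmin⟩ := J.exists_min_image (fun j => α j / ⟪v j, u⟫) ⟨i, hiJ⟩
  have hj0pos : 0 < ⟪v j0, u⟫ := (Finset.mem_filter.mp hj0J).2
  set c := α j0 / ⟪v j0, u⟫ with hcdef
  have hc0 : 0 < c := div_pos (hα j0) hj0pos
  have hfi : c ≤ α i / ⟪v i, u⟫ := hmin i hiJ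
  have hlt : α i / ⟪v i, u⟫ < L := by
    rw [div_lt_iff₀ (hUL.trans hui')]
    have hαi : α i ≤ U := Finset.le_sup' α (Finset.mem_compl.mpr hiI)
    have : L * (U / L) < L * ⟪v i, u⟫ := by
      exact mul_lt_mul_of_pos_left hui' hL0
    rw [mul_div_cancel₀ U hL0.ne'] at this
    linarith
  have hcL : c < L := lt_of_le_of_lt hfi hlt
  have hj0I : j0 ∉ I := by
    intro h
    have h1 : L ≤ α j0 := Finset.inf'_le α h
    have h2 : L ≤ c := by
      rw [le_div_iff₀ hj0pos]
      calc L * ⟪v j0, u⟫ ≤ L * 1 := by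
            exact mul_le_mul_of_nonneg_left (hCS j0) hL0.le
        _ = L := mul_one L
        _ ≤ α j0 := h1
    linarith
  -- the body P and key parameters
  set S : Set (E n) := ⋂ j, Hminus (α j) (v j) with hSdef
  set P : Set (E n) := polarBody S with hPdef
  have hSmem : ∀ x : E n, x ∈ S ↔ ∀ j, ⟪x, v j⟫ ≤ α j := by
    intro x; simp [hSdef, Hminus, Set.mem_iInter]
  -- membership: (1/α j0) • v j0 ∈ P
  have hA : (1 / α j0) • v j0 ∈ P := by
    intro y hy
    have hyj := (hSmem y).mp hy j0
    have : ⟪(1 / α j0) • v j0, y⟫ = (1 / α j0) * ⟪y, v j0⟫ := by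
      rw [real_inner_smul_left, real_inner_comm]
    rw [this]
    calc (1 / α j0) * ⟪y, v j0⟫ ≤ (1 / α j0) * α j0 := by
          exact mul_le_mul_of_nonneg_left hyj (by have := hα j0; positivity)
      _ = 1 := one_div_mul_cancel (hα j0).ne'
  -- bounded above
  have hmne : (Finset.univ : Finset (Fin m)).Nonempty := ⟨i, Finset.mem_univ i⟩
  set ε := Finset.univ.inf' hmne α with hεdef
  have hε0 : 0 < ε := by
    obtain ⟨k, _, hk⟩ := Finset.exists_mem_eq_inf' hmne α
    rw [hεdef, hk]; exact hα k
  have hεle : ∀ j, ε ≤ α j := fun j => Finset.inf'_le α (Finset.mem_univ j)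
  have hεS : ε • v j0 ∈ S := by
    rw [hSmem]
    intro j
    have hcs : ⟪v j0, v j⟫ ≤ 1 := by
      have := real_inner_le_norm (v j0) (v j)
      rwa [hvn j0, hvn j, one_mul] at this
    have : ⟪ε • v j0, v j⟫ = ε * ⟪v j0, v j⟫ := real_inner_smul_left _ _ _
    rw [this]
    calc ε * ⟪v j0, v j⟫ ≤ ε * 1 := mul_le_mul_of_nonneg_left hcs hε0.le
      _ = ε := mul_one ε
      _ ≤ α j := hεle j
  have hB : BddAbove {a : ℝ | 0 ≤ a ∧ a • v j0 ∈ P} := by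
    refine ⟨1 / ε, fun a ha => ?_⟩
    obtain ⟨ha0, haP⟩ := ha
    have := haP (ε • v j0) hεS
    rw [real_inner_smul_left, real_inner_smul_right, real_inner_self_eq_norm_sq,
      hvn j0] at this
    have h1 : a * ε ≤ 1 := by linarith [this]
    rw [le_div_iff₀ hε0]; linarith
  have hr : 1 / α j0 ≤ radialFn P (v j0) :=
    le_csSup hB ⟨by have := hα j0; positivity, hA⟩
  -- c • u ∈ S
  have hcuS : c • u ∈ S := by
    rw [hSmem]
    intro j
    have : ⟪c • u, v j⟫ = c * ⟪v j, u⟫ := by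
      rw [real_inner_smul_left, real_inner_comm]
    rw [this]
    rcases le_or_gt ⟪v j, u⟫ 0 with h | h
    · have : c * ⟪v j, u⟫ ≤ 0 := mul_nonpos_of_nonneg_of_nonpos hc0.le h
      linarith [hα j]
    · have hjJ : j ∈ J := Finset.mem_filter.mpr ⟨Finset.mem_univ _, h⟩
      have := hmin j hjJ
      rw [le_div_iff₀ h] at this
      linarith
  -- conclusion
  have hmem : u ∈ normalCone P (radialFn P (v j0) • v j0) := by
    refine ⟨huS, fun y hy => ?_⟩
    have hy' : ⟪y, u⟫ ≤ 1 / c := by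
      have := hy (c • u) hcuS
      rw [real_inner_smul_right] at this
      rw [le_div_iff₀ hc0, mul_comm]
      exact this
    have hx : 1 / c ≤ ⟪radialFn P (v j0) • v j0, u⟫ := by
      rw [real_inner_smul_left]
      have h1 : 1 / c = (1 / α j0) * ⟪v j0, u⟫ := by
        rw [hcdef, one_div_div, div_eq_mul_one_div, mul_comm, one_div]
      rw [h1]
      exact mul_le_mul_of_nonneg_right hr hj0pos.le
    rw [inner_sub_left]
    linarith
  simp only [rGauss, Set.mem_iUnion, Set.mem_setOf_eq, Set.mem_singleton_iff,
    exists_prop]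
  exact ⟨v j0, ⟨j0, hj0I, rfl⟩, hmem⟩
end
end

section
/- With P* = ∩_{i=1}^m H^-(α_i, v_i), I ⊂ {1,…,m} nonempty and proper, L = min_{i∈I} α_i: if u ∈ S^{n-1} satisfies ρ_{P*}(u) < L, then the minimum in ρ_{P*}(u) = min_{u·v_i>0} α_i/(u·v_i) is attained at some index i ∉ I, and consequently u belongs to the radial Gauss image α_P(∪_{i∉I}{v_i}). -/
open MeasureTheory Set Real
open scoped RealInnerProductSpace ENNReal NNReal

noncomputable section

/-- if `ρ_{P*}(u) < L = min_{i ∈ I} α_i`, then the minimum defining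
`ρ_{P*}(u)` is attained at some `i ∉ I`, and `u` belongs to the radial Gauss image
`α_P(⋃_{i ∉ I} {v_i})`. -/
theorem stmt10 {n m : ℕ} (v : Fin m → E n) (hv : ∀ i, v i ∈ uSphere n)
    (hnc : ¬ InHemisphere (Set.range v))
    (α : Fin m → ℝ) (hα : ∀ i, 0 < α i)
    (I : Finset (Fin m)) (hIne : I.Nonempty) (hIc : Iᶜ.Nonempty)
    (u : E n) (hu : u ∈ uSphere n)
    (hρ : radialFn (⋂ i, Hminus (α i) (v i)) u < I.inf' hIne α) :
    (∃ i ∉ I, 0 < ⟪u, v i⟫ ∧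
        radialFn (⋂ i, Hminus (α i) (v i)) u = α i / ⟪u, v i⟫) ∧
    u ∈ rGauss (polarBody (⋂ i, Hminus (α i) (v i))) (⋃ i ∈ {j : Fin m | j ∉ I}, {v i}) := by
  classical
  set Pstar := ⋂ i, Hminus (α i) (v i) with hPstar
  have hun : ‖u‖ = 1 := by
    simpa [uSphere] using hu
  -- inner products
  set ip : Fin m → ℝ := fun i => ⟪u, v i⟫ with hip
  -- set of indices with positive inner product
  set T : Finset (Fin m) := Finset.univ.filter (fun i => 0 < ip i) with hT
  have hTne : T.Nonempty := by
    by_contra h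
    apply hnc
    refine ⟨-u, ?_, ?_⟩
    · simp [uSphere, hun]
    · rintro w ⟨i, rfl⟩
      have : ¬ 0 < ip i := by
        intro hpos
        exact h ⟨i, by simp [hT, hpos]⟩
      have : ip i ≤ 0 := not_lt.1 this
      have : ⟪-u, v i⟫ = -ip i := by simp [hip]
      rw [this]
      linarith [not_lt.1 ‹¬ 0 < ip i›]
  set c : ℝ := T.inf' hTne (fun i => α i / ip i) with hc
  have hc_pos : 0 < c := by
    rw [hc]
    apply Finset.lt_inf'_iff hTne (f := fun i => α i / ip i) (a := (0:ℝ)) |>.2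
    intro i hi
    have hipi : 0 < ip i := by simpa [hT] using hi
    exact div_pos (hα i) hipi
  -- the defining set of the radial function
  have hsetEq : {a : ℝ | 0 ≤ a ∧ a • u ∈ Pstar} = Set.Icc 0 c := by
    ext a
    constructor
    · rintro ⟨ha0, haP⟩
      refine ⟨ha0, ?_⟩
      rw [hc]
      apply Finset.le_inf'
      intro i hi
      have hipi : 0 < ip i := by simpa [hT] using hi
      have h2 : ⟪a • u, v i⟫ ≤ α i := Set.mem_iInter.1 haP i
      rw [real_inner_smul_left] at h2
      rw [le_div_iff₀ hipi]; exact h2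
    · rintro ⟨ha0, hac⟩
      refine ⟨ha0, ?_⟩
      rw [hPstar, Set.mem_iInter]
      intro i
      show ⟪a • u, v i⟫ ≤ α i
      rw [real_inner_smul_left]
      rcases le_or_gt (ip i) 0 with hle | hpos
      · have : a * ip i ≤ 0 := mul_nonpos_of_nonneg_of_nonpos ha0 hle
        linarith [hα i]
      · have hiT : i ∈ T := by simp [hT, hpos]
        have : c ≤ α i / ip i := by
          rw [hc]; exact Finset.inf'_le _ hiT
        have : a ≤ α i / ip i := le_trans hac this
        calc a * ip i ≤ (α i / ip i) * ip i := by
              exact mul_le_mul_of_nonneg_right this hpos.le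
          _ = α i := by field_simp
  have hradial : radialFn Pstar u = c := by
    rw [radialFn, hsetEq, csSup_Icc hc_pos.le]
  -- index attaining the min
  obtain ⟨j, hjT, hjval⟩ := Finset.exists_mem_eq_inf' hTne (fun i => α i / ip i)
  have hipj : 0 < ip j := by simpa [hT] using hjT
  have hcj : c = α j / ip j := by rw [hc, hjval]
  -- j ∉ I
  have hipj_le : ip j ≤ 1 := by
    calc ip j ≤ ‖u‖ * ‖v j‖ := real_inner_le_norm u (v j)
      _ = 1 := by
        have : ‖v j‖ = 1 := by simpa [uSphere] using hv j
        rw [hun, this, one_mul]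
  have hjI : j ∉ I := by
    intro hjmem
    have h1 : I.inf' hIne α ≤ α j := Finset.inf'_le _ hjmem
    have h2 : α j ≤ α j / ip j := by
      rw [le_div_iff₀ hipj]
      nlinarith [hα j]
    rw [hradial, hcj] at hρ
    linarith
  -- key membership facts
  have hρuP : c • u ∈ Pstar := by
    have : c ∈ {a : ℝ | 0 ≤ a ∧ a • u ∈ Pstar} := by
      rw [hsetEq]; exact ⟨hc_pos.le, le_rfl⟩
    exact this.2
  set P := polarBody Pstar with hP
  -- (1/α j) • v j ∈ P
  have hmemP : (α j)⁻¹ • v j ∈ P := by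
    intro y hy
    have hyj : ⟪y, v j⟫ ≤ α j := by
      have := Set.mem_iInter.1 hy j
      simpa [Hminus] using this
    rw [real_inner_smul_left, real_inner_comm]
    rw [inv_mul_le_iff₀ (hα j), mul_one]
    exact hyj
  -- bounded above
  have hbdd : BddAbove {a : ℝ | 0 ≤ a ∧ a • v j ∈ P} := by
    refine ⟨(c * ip j)⁻¹, ?_⟩
    rintro a ⟨ha0, haP⟩
    have h2 : ⟪a • v j, c • u⟫ ≤ 1 := haP (c • u) hρuP
    rw [real_inner_smul_left, real_inner_smul_right, real_inner_comm u (v j)] at h2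
    have hpos : 0 < c * ip j := mul_pos hc_pos hipj
    have h3 : a * (c * ip j) ≤ 1 := by rw [mul_comm c (ip j)] at h2 ⊢; linarith [h2]
    have h4 : a ≤ 1 / (c * ip j) := (le_div_iff₀ hpos).2 h3
    rwa [one_div] at h4
  have hradP_ge : (α j)⁻¹ ≤ radialFn P (v j) := by
    apply le_csSup hbdd
    exact ⟨inv_nonneg.2 (hα j).le, hmemP⟩
  refine ⟨⟨j, hjI, hipj, by rw [hradial, hcj]⟩, ?_⟩
  -- radial Gauss image
  rw [rGauss, Set.mem_iUnion]
  refine ⟨v j, ?_⟩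
  rw [Set.mem_iUnion]
  refine ⟨?_, ?_⟩
  · rw [Set.mem_iUnion]
    exact ⟨j, by simp [hjI]⟩
  · refine ⟨hu, ?_⟩
    intro y hy
    rw [inner_sub_left]
    have hyu : ⟪y, u⟫ ≤ c⁻¹ := by
      have := hy (c • u) hρuP
      rw [real_inner_smul_right] at this
      have h4 : ⟪y, u⟫ ≤ 1 / c := (le_div_iff₀' hc_pos).2 this
      rwa [one_div] at h4
    have hvju : ⟪v j, u⟫ = ip j := real_inner_comm _ _
    have hkey : c⁻¹ ≤ radialFn P (v j) * ip j := by
      have h1 : (α j)⁻¹ * ip j ≤ radialFn P (v j) * ip j :=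
        mul_le_mul_of_nonneg_right hradP_ge hipj.le
      have h2 : c⁻¹ = (α j)⁻¹ * ip j := by
        rw [hcj]
        field_simp
      linarith
    have : ⟪radialFn P (v j) • v j, u⟫ = radialFn P (v j) * ip j := by
      rw [real_inner_smul_left, hvju]
    rw [this]
    linarith
end
end

section
/- Let P* = ∩_{i=1}^m H^-(α_i, v_i) and define for 0 < a ≤ 1 the partially rescaled polytope P_a* = (∩_{i∈I} H^-(α_i, v_i)) ∩ (∩_{i∉I} H^-(aα_i, v_i)), where I ⊂ {1,…,m} is nonempty and proper. Then for every u ∈ S^{n-1}: ρ_{P_a*}(u) = min over {i : u·v_i > 0} of (α_i/(u·v_i) if i∈I, else aα_i/(u·v_i)); moreover the set α_{P_a}(∪_{i∉I}{v_i}) is monotonically increasing (as a set) as a decreases. -/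
open MeasureTheory Set Real
open scoped RealInnerProductSpace ENNReal NNReal

noncomputable section

section Aux

variable {n m : ℕ}

lemma mem_interHminus {v : Fin m → E n} {β : Fin m → ℝ} {x : E n} :
    x ∈ ⋂ i, Hminus (β i) (v i) ↔ ∀ i, ⟪x, v i⟫ ≤ β i := by
  simp [Hminus, Set.mem_iInter]

lemma zero_mem_interHminus {v : Fin m → E n} {β : Fin m → ℝ} (hβ : ∀ i, 0 < β i) :
    (0 : E n) ∈ ⋂ i, Hminus (β i) (v i) :=
  mem_interHminus.mpr fun i => by simp [(hβ i).le]

lemma exists_pos_inner {v : Fin m → E n}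
    (hnc : ¬ InHemisphere (Set.range v)) {u : E n} (hu : u ∈ uSphere n) :
    ∃ i, 0 < ⟪u, v i⟫ := by
  by_contra hcon
  push_neg at hcon
  apply hnc
  refine ⟨-u, ?_, ?_⟩
  · have h1 : ‖u‖ = 1 := mem_sphere_zero_iff_norm.mp hu
    simpa [uSphere, mem_sphere_zero_iff_norm] using h1
  · rintro x ⟨i, rfl⟩
    have := hcon i
    rw [inner_neg_left]
    linarith

lemma aux_le_inv {t h : ℝ} (ht : 0 < t) (hh : 0 < h) (hle : h ≤ t⁻¹) : t ≤ h⁻¹ := by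
  rw [← one_div, le_div_iff₀ hh]
  rw [← one_div, le_div_iff₀ ht] at hle
  nlinarith

lemma aux_inv {x y z : ℝ} (hx : 0 < x) (hy : 0 < y) (h : x ≤ y * z) : y⁻¹ ≤ x⁻¹ * z := by
  have hz : 0 < z := by nlinarith
  have h1 : (1 : ℝ) / y ≤ z / x := by
    rw [div_le_div_iff₀ hy hx]; nlinarith
  calc y⁻¹ = 1 / y := (one_div y).symm
    _ ≤ z / x := h1
    _ = x⁻¹ * z := by rw [div_eq_mul_inv, mul_comm]

lemma aux_inv_anti {x y : ℝ} (hx : 0 < x) (h : x ≤ y) : y⁻¹ ≤ x⁻¹ := by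
  have hy : 0 < y := hx.trans_le h
  have := aux_inv hx hy (by linarith : x ≤ y * 1)
  simpa using this

lemma interSet_eq {v : Fin m → E n} {β : Fin m → ℝ} (hβ : ∀ i, 0 < β i) (u : E n)
    (hJ : (Finset.univ.filter fun i => (0:ℝ) < ⟪u, v i⟫).Nonempty) :
    {t : ℝ | 0 ≤ t ∧ t • u ∈ ⋂ i, Hminus (β i) (v i)} =
      Set.Icc 0 ((Finset.univ.filter fun i => (0:ℝ) < ⟪u, v i⟫).inf' hJ
        fun i => β i / ⟪u, v i⟫) := by
  ext t
  simp only [Set.mem_setOf_eq, Set.mem_Icc, mem_interHminus]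
  constructor
  · rintro ⟨ht, hQ⟩
    refine ⟨ht, Finset.le_inf' _ _ fun i hi => ?_⟩
    rw [Finset.mem_filter] at hi
    have hQi := hQ i
    rw [real_inner_smul_left] at hQi
    exact (le_div_iff₀ hi.2).mpr hQi
  · rintro ⟨ht, htle⟩
    refine ⟨ht, fun i => ?_⟩
    rw [real_inner_smul_left]
    rcases le_or_gt ⟪u, v i⟫ 0 with h | h
    · nlinarith [hβ i, mul_nonneg ht (neg_nonneg.mpr h)]
    · have hle : t ≤ β i / ⟪u, v i⟫ :=
        le_trans htle (Finset.inf'_le _ (Finset.mem_filter.mpr ⟨Finset.mem_univ i, h⟩))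
      exact (le_div_iff₀ h).mp hle

lemma inf'_ratio_pos {v : Fin m → E n} {β : Fin m → ℝ} (hβ : ∀ i, 0 < β i) (u : E n)
    (hJ : (Finset.univ.filter fun i => (0:ℝ) < ⟪u, v i⟫).Nonempty) :
    0 < (Finset.univ.filter fun i => (0:ℝ) < ⟪u, v i⟫).inf' hJ
        fun i => β i / ⟪u, v i⟫ := by
  rw [Finset.lt_inf'_iff]
  exact fun i hi => div_pos (hβ i) (Finset.mem_filter.mp hi).2

lemma radialFn_inter {v : Fin m → E n} {β : Fin m → ℝ} (hβ : ∀ i, 0 < β i) (u : E n)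
    (hJ : (Finset.univ.filter fun i => (0:ℝ) < ⟪u, v i⟫).Nonempty) :
    radialFn (⋂ i, Hminus (β i) (v i)) u =
      (Finset.univ.filter fun i => (0:ℝ) < ⟪u, v i⟫).inf' hJ
        fun i => β i / ⟪u, v i⟫ := by
  rw [radialFn, interSet_eq hβ u hJ, csSup_Icc (inf'_ratio_pos hβ u hJ).le]

lemma bounded_inter {v : Fin m → E n} (hnc : ¬ InHemisphere (Set.range v))
    {β : Fin m → ℝ} (hβ : ∀ i, 0 < β i)
    (hm : (Finset.univ : Finset (Fin m)).Nonempty) :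
    ∃ R : ℝ, 0 < R ∧ ∀ x ∈ ⋂ i, Hminus (β i) (v i), ‖x‖ ≤ R := by
  by_cases hsp : (uSphere n).Nonempty
  · set g : E n → ℝ := fun u => ∑ j, max 0 ⟪u, v j⟫ with hg
    have hgc : Continuous g := by
      apply continuous_finset_sum
      exact fun j _ => continuous_const.max (continuous_id.inner continuous_const)
    obtain ⟨u0, hu0, hmin'⟩ :=
      (isCompact_sphere (0 : E n) 1).exists_isMinOn hsp hgc.continuousOn
    have hmin : ∀ y ∈ Metric.sphere (0 : E n) 1, g u0 ≤ g y := fun y hy => hmin' hy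
    have hc : 0 < g u0 := by
      obtain ⟨i, hi⟩ := exists_pos_inner hnc (show u0 ∈ uSphere n from hu0)
      refine Finset.sum_pos' (fun j _ => le_max_left 0 _) ⟨i, Finset.mem_univ i, ?_⟩
      exact lt_max_of_lt_right hi
    set B := ∑ j, β j with hB
    have hBpos : 0 < B := Finset.sum_pos (fun j _ => hβ j) hm
    refine ⟨B / g u0, div_pos hBpos hc, fun x hx => ?_⟩
    rcases eq_or_ne x 0 with rfl | hx0
    · rw [norm_zero]; exact (div_pos hBpos hc).le
    · have hxn : 0 < ‖x‖ := norm_pos_iff.mpr hx0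
      have hmem : ‖x‖⁻¹ • x ∈ Metric.sphere (0 : E n) 1 := by
        rw [mem_sphere_zero_iff_norm, norm_smul, norm_inv, norm_norm,
          inv_mul_cancel₀ hxn.ne']
      have h1 : g u0 ≤ g (‖x‖⁻¹ • x) := hmin _ hmem
      have h2 : g (‖x‖⁻¹ • x) = ‖x‖⁻¹ * ∑ j, max 0 ⟪x, v j⟫ := by
        rw [hg]
        simp only
        rw [Finset.mul_sum]
        refine Finset.sum_congr rfl fun j _ => ?_
        rw [real_inner_smul_left]
        rcases le_or_gt ⟪x, v j⟫ 0 with h | h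
        · rw [max_eq_left, max_eq_left h, mul_zero]
          exact mul_nonpos_iff.mpr (Or.inl ⟨by positivity, h⟩)
        · rw [max_eq_right, max_eq_right h.le]
          positivity
      have h3 : ∑ j, max 0 ⟪x, v j⟫ ≤ B := by
        rw [hB]
        exact Finset.sum_le_sum fun j _ =>
          max_le (hβ j).le (mem_interHminus.mp hx j)
      rw [le_div_iff₀ hc]
      have h4 : ‖x‖ * g u0 ≤ ‖x‖ * (‖x‖⁻¹ * ∑ j, max 0 ⟪x, v j⟫) := by
        rw [← h2]; exact mul_le_mul_of_nonneg_left h1 hxn.le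
      rw [← mul_assoc, mul_inv_cancel₀ hxn.ne', one_mul] at h4
      linarith
  · refine ⟨1, one_pos, fun x hx => ?_⟩
    by_contra hcon
    have hx0 : x ≠ 0 := by rintro rfl; simp at hcon
    refine hsp ⟨‖x‖⁻¹ • x, ?_⟩
    have hxn : ‖x‖ ≠ 0 := norm_ne_zero_iff.mpr hx0
    simp [uSphere, mem_sphere_zero_iff_norm, norm_smul, inv_mul_cancel₀ hxn]

lemma bddAbove_img {Q : Set (E n)} {R : ℝ} (hR : ∀ x ∈ Q, ‖x‖ ≤ R) {u : E n}
    (hu : ‖u‖ = 1) : BddAbove ((fun x => ⟪x, u⟫) '' Q) := by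
  refine ⟨R, ?_⟩
  rintro r ⟨x, hx, rfl⟩
  calc ⟪x, u⟫ ≤ ‖x‖ * ‖u‖ := real_inner_le_norm _ _
    _ = ‖x‖ := by rw [hu, mul_one]
    _ ≤ R := hR x hx

lemma radialFn_polar {v : Fin m → E n} (hvn : ∀ i, ‖v i‖ = 1)
    {β : Fin m → ℝ} (hβ : ∀ i, 0 < β i)
    (hm : (Finset.univ : Finset (Fin m)).Nonempty)
    {R : ℝ} (hR : ∀ x ∈ ⋂ i, Hminus (β i) (v i), ‖x‖ ≤ R)
    {u : E n} (hu : ‖u‖ = 1) :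
    0 < sSup ((fun x => ⟪x, u⟫) '' ⋂ i, Hminus (β i) (v i)) ∧
      radialFn (polarBody (⋂ i, Hminus (β i) (v i))) u =
        (sSup ((fun x => ⟪x, u⟫) '' ⋂ i, Hminus (β i) (v i)))⁻¹ := by
  set Q := ⋂ i, Hminus (β i) (v i) with hQdef
  have h0Q : (0 : E n) ∈ Q := zero_mem_interHminus hβ
  have hne : ((fun x => ⟪x, u⟫) '' Q).Nonempty := ⟨_, ⟨0, h0Q, rfl⟩⟩
  have hbdd : BddAbove ((fun x => ⟪x, u⟫) '' Q) := bddAbove_img hR hu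
  set h := sSup ((fun x => ⟪x, u⟫) '' Q) with hhdef
  set ε := Finset.univ.inf' hm β with hεdef
  have hε : 0 < ε := by rw [hεdef, Finset.lt_inf'_iff]; exact fun i _ => hβ i
  have hεQ : ε • u ∈ Q := by
    refine mem_interHminus.mpr fun i => ?_
    rw [real_inner_smul_left]
    have h1 : ⟪u, v i⟫ ≤ 1 := by
      calc ⟪u, v i⟫ ≤ ‖u‖ * ‖v i‖ := real_inner_le_norm _ _
        _ = 1 := by rw [hu, hvn i, mul_one]
    calc ε * ⟪u, v i⟫ ≤ ε * 1 := mul_le_mul_of_nonneg_left h1 hε.le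
      _ = ε := mul_one ε
      _ ≤ β i := Finset.inf'_le _ (Finset.mem_univ i)
  have hεu : ⟪ε • u, u⟫ = ε := by
    rw [real_inner_smul_left, real_inner_self_eq_norm_mul_norm, hu, mul_one, mul_one]
  have hpos : 0 < h := by
    have := le_csSup hbdd ⟨ε • u, hεQ, hεu⟩
    linarith
  refine ⟨hpos, ?_⟩
  have hset : {t : ℝ | 0 ≤ t ∧ t • u ∈ polarBody Q} = Set.Icc 0 h⁻¹ := by
    ext t
    simp only [Set.mem_setOf_eq, Set.mem_Icc, polarBody]
    constructor
    · rintro ⟨ht0, hmem⟩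
      refine ⟨ht0, ?_⟩
      rcases eq_or_lt_of_le ht0 with heq | htpos
      · rw [← heq]; exact inv_nonneg.mpr hpos.le
      · have hle : h ≤ t⁻¹ := by
          refine csSup_le hne ?_
          rintro r ⟨x, hx, rfl⟩
          have hm1 := hmem x hx
          rw [real_inner_smul_left] at hm1
          show ⟪x, u⟫ ≤ t⁻¹
          rw [real_inner_comm, ← one_div, le_div_iff₀ htpos]
          linarith [hm1]
        exact aux_le_inv htpos hpos hle
    · rintro ⟨ht0, htle⟩
      refine ⟨ht0, fun y hy => ?_⟩
      have hyh : ⟪u, y⟫ ≤ h := by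
        rw [real_inner_comm]; exact le_csSup hbdd ⟨y, hy, rfl⟩
      rw [real_inner_smul_left]
      rcases le_or_gt ⟪u, y⟫ 0 with hneg | hpos'
      · nlinarith [mul_nonneg ht0 (neg_nonneg.mpr hneg)]
      · calc t * ⟪u, y⟫ ≤ h⁻¹ * h :=
            mul_le_mul htle hyh hpos'.le (inv_nonneg.mpr hpos.le)
          _ = 1 := inv_mul_cancel₀ hpos.ne'
  rw [radialFn, hset, csSup_Icc (inv_nonneg.mpr hpos.le)]

lemma part2 (v : Fin m → E n) (hv : ∀ i, v i ∈ uSphere n)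
    (hnc : ¬ InHemisphere (Set.range v)) (I : Finset (Fin m))
    (hm : (Finset.univ : Finset (Fin m)).Nonempty)
    (βa βb : Fin m → ℝ) (hβa : ∀ i, 0 < βa i) (hβb : ∀ i, 0 < βb i)
    (hle : ∀ i, βa i ≤ βb i) (heq : ∀ i ∈ I, βa i = βb i) :
    rGauss (polarBody (⋂ i, Hminus (βb i) (v i))) (⋃ i ∈ {j : Fin m | j ∉ I}, {v i}) ⊆
      rGauss (polarBody (⋂ i, Hminus (βa i) (v i)))
        (⋃ i ∈ {j : Fin m | j ∉ I}, {v i}) := by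
  classical
  intro w hw
  have hvn : ∀ i, ‖v i‖ = 1 := fun i => mem_sphere_zero_iff_norm.mp (hv i)
  obtain ⟨R, hRpos, hRb⟩ := bounded_inter hnc hβb hm
  have hQab : (⋂ i, Hminus (βa i) (v i)) ⊆ ⋂ i, Hminus (βb i) (v i) :=
    fun x hx => mem_interHminus.mpr fun i => (mem_interHminus.mp hx i).trans (hle i)
  have hRa : ∀ x ∈ ⋂ i, Hminus (βa i) (v i), ‖x‖ ≤ R := fun x hx => hRb x (hQab hx)
  simp only [rGauss, Set.mem_iUnion, exists_prop] at hw
  obtain ⟨u, hu, hwN⟩ := hw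
  simp only [Set.mem_iUnion, Set.mem_setOf_eq, Set.mem_singleton_iff, exists_prop] at hu
  obtain ⟨i, hiI, rfl⟩ := hu
  simp only [normalCone, Set.mem_setOf_eq] at hwN
  obtain ⟨hw1, hw2⟩ := hwN
  have hwu : ‖w‖ = 1 := mem_sphere_zero_iff_norm.mp hw1
  obtain ⟨hhb_pos, hρb⟩ := radialFn_polar hvn hβb hm hRb (hvn i)
  set hb' := sSup ((fun x => ⟪x, v i⟫) '' ⋂ i, Hminus (βb i) (v i)) with hhb'
  -- ⟪v i, w⟫ > 0
  have hww : ⟪w, w⟫ = 1 := by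
    rw [real_inner_self_eq_norm_mul_norm, hwu, mul_one]
  have hy0 : R⁻¹ • w ∈ polarBody (⋂ i, Hminus (βb i) (v i)) := by
    simp only [polarBody, Set.mem_setOf_eq]
    intro y hy
    rw [real_inner_smul_left]
    have h1 : ⟪w, y⟫ ≤ R := by
      calc ⟪w, y⟫ ≤ ‖w‖ * ‖y‖ := real_inner_le_norm _ _
        _ = ‖y‖ := by rw [hwu, one_mul]
        _ ≤ R := hRb y hy
    calc R⁻¹ * ⟪w, y⟫ ≤ R⁻¹ * R := mul_le_mul_of_nonneg_left h1 (inv_nonneg.mpr hRpos.le)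
      _ = 1 := inv_mul_cancel₀ hRpos.ne'
  have hkey0 := hw2 _ hy0
  rw [inner_sub_left, hρb] at hkey0
  simp only [real_inner_smul_left] at hkey0
  rw [hww] at hkey0
  have hiw : 0 < ⟪v i, w⟫ := by
    by_contra hcon
    push_neg at hcon
    nlinarith [inv_pos.mpr hRpos, inv_pos.mpr hhb_pos,
      mul_nonneg (inv_pos.mpr hhb_pos).le (neg_nonneg.mpr hcon)]
  set c := hb'⁻¹ * ⟪v i, w⟫ with hcdef
  have hc : 0 < c := mul_pos (inv_pos.mpr hhb_pos) hiw
  -- step 3 : ∀ j, ⟪w, v j⟫ ≤ c * βb j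
  have hstep3 : ∀ j, ⟪w, v j⟫ ≤ c * βb j := by
    intro j
    have hyj : (βb j)⁻¹ • v j ∈ polarBody (⋂ i, Hminus (βb i) (v i)) := by
      simp only [polarBody, Set.mem_setOf_eq]
      intro y hy
      rw [real_inner_smul_left, real_inner_comm]
      calc (βb j)⁻¹ * ⟪y, v j⟫ ≤ (βb j)⁻¹ * βb j :=
          mul_le_mul_of_nonneg_left (mem_interHminus.mp hy j) (inv_nonneg.mpr (hβb j).le)
        _ = 1 := inv_mul_cancel₀ (hβb j).ne'
    have hkey := hw2 _ hyj
    rw [inner_sub_left, hρb] at hkey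
    simp only [real_inner_smul_left] at hkey
    have h3 : (βb j)⁻¹ * ⟪v j, w⟫ ≤ c := by rw [hcdef]; linarith
    have h4 : ⟪v j, w⟫ ≤ c * βb j := by
      have h5 : βb j * ((βb j)⁻¹ * ⟪v j, w⟫) ≤ βb j * c :=
        mul_le_mul_of_nonneg_left h3 (hβb j).le
      rw [← mul_assoc, mul_inv_cancel₀ (hβb j).ne', one_mul] at h5
      linarith [h5, mul_comm (βb j) c]
    rw [real_inner_comm]; exact h4
  -- step 4
  obtain ⟨i1, hi1⟩ := exists_pos_inner hnc hw1
  have hJ : (Finset.univ.filter fun j => (0:ℝ) < ⟪w, v j⟫).Nonempty :=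
    ⟨i1, Finset.mem_filter.mpr ⟨Finset.mem_univ _, hi1⟩⟩
  set J := Finset.univ.filter fun j => (0:ℝ) < ⟪w, v j⟫ with hJdef
  set Ta := J.inf' hJ (fun j => βa j / ⟪w, v j⟫) with hTadef
  set Tb := J.inf' hJ (fun j => βb j / ⟪w, v j⟫) with hTbdef
  have hTa_pos : 0 < Ta := by
    rw [hTadef, Finset.lt_inf'_iff]
    exact fun j hj => div_pos (hβa j) (Finset.mem_filter.mp hj).2
  have hTb_pos : 0 < Tb := by
    rw [hTbdef, Finset.lt_inf'_iff]
    exact fun j hj => div_pos (hβb j) (Finset.mem_filter.mp hj).2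
  have hcTb : c⁻¹ ≤ Tb := by
    rw [hTbdef]
    refine Finset.le_inf' _ _ fun j hj => ?_
    have hjpos := (Finset.mem_filter.mp hj).2
    rw [le_div_iff₀ hjpos]
    have h6 : c⁻¹ * ⟪w, v j⟫ ≤ c⁻¹ * (c * βb j) :=
      mul_le_mul_of_nonneg_left (hstep3 j) (inv_nonneg.mpr hc.le)
    rw [← mul_assoc, inv_mul_cancel₀ hc.ne', one_mul] at h6
    exact h6
  have keyb : hb' ≤ Tb * ⟪v i, w⟫ := by
    have h1 : c⁻¹ = hb' * ⟪v i, w⟫⁻¹ := by rw [hcdef, mul_inv, inv_inv]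
    have h2 : hb' * ⟪v i, w⟫⁻¹ ≤ Tb := h1 ▸ hcTb
    have h3 : hb' * ⟪v i, w⟫⁻¹ * ⟪v i, w⟫ ≤ Tb * ⟪v i, w⟫ :=
      mul_le_mul_of_nonneg_right h2 hiw.le
    rwa [mul_assoc, inv_mul_cancel₀ hiw.ne', mul_one] at h3
  -- Ta • w ∈ Q_a
  have hTaQ : Ta • w ∈ ⋂ i', Hminus (βa i') (v i') := by
    refine mem_interHminus.mpr fun j => ?_
    rw [real_inner_smul_left]
    rcases le_or_gt ⟪w, v j⟫ 0 with hn | hp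
    · nlinarith [hβa j, mul_nonneg hTa_pos.le (neg_nonneg.mpr hn)]
    · have hle' : Ta ≤ βa j / ⟪w, v j⟫ := by
        rw [hTadef]
        exact Finset.inf'_le _ (Finset.mem_filter.mpr ⟨Finset.mem_univ j, hp⟩)
      exact (le_div_iff₀ hp).mp hle'
  -- the minimizer of Ta
  obtain ⟨j0, hj0J, hj0⟩ := Finset.exists_mem_eq_inf' hJ (fun j => βa j / ⟪w, v j⟫)
  rw [← hTadef] at hj0
  have hj0pos : 0 < ⟪w, v j0⟫ := (Finset.mem_filter.mp hj0J).2
  by_cases hj0I : j0 ∈ I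
  · -- Case B: use v i again
    have hTab : Tb ≤ Ta := by
      have h7 : Tb ≤ βb j0 / ⟪w, v j0⟫ := by
        rw [hTbdef]; exact Finset.inf'_le _ hj0J
      rw [hj0, heq j0 hj0I]
      exact h7
    have hTaTb : Ta ≤ Tb := by
      rw [hTbdef]
      refine Finset.le_inf' _ _ fun j hj => ?_
      have h8 : Ta ≤ βa j / ⟪w, v j⟫ := by
        rw [hTadef]; exact Finset.inf'_le _ hj
      exact h8.trans ((div_le_div_iff_of_pos_right (Finset.mem_filter.mp hj).2).mpr (hle j))
    have hTaTb' : Ta = Tb := le_antisymm hTaTb hTab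
    obtain ⟨hha_pos, hρa⟩ := radialFn_polar hvn hβa hm hRa (hvn i)
    set ha' := sSup ((fun x => ⟪x, v i⟫) '' ⋂ i, Hminus (βa i) (v i)) with hha'
    have hbddb : BddAbove ((fun x => ⟪x, v i⟫) '' ⋂ i, Hminus (βb i) (v i)) :=
      bddAbove_img hRb (hvn i)
    have hab' : ha' ≤ hb' := by
      rw [hha', hhb']
      refine csSup_le ⟨_, ⟨0, zero_mem_interHminus hβa, rfl⟩⟩ ?_
      rintro r ⟨x, hx, rfl⟩
      exact le_csSup hbddb ⟨x, hQab hx, rfl⟩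
    refine Set.mem_biUnion (Set.mem_biUnion (show i ∈ {j : Fin m | j ∉ I} from hiI)
      (Set.mem_singleton _)) ?_
    simp only [normalCone, Set.mem_setOf_eq]
    refine ⟨hw1, fun y hy => ?_⟩
    rw [inner_sub_left, hρa]
    simp only [real_inner_smul_left]
    simp only [polarBody, Set.mem_setOf_eq] at hy
    have h1 := hy _ hTaQ
    rw [real_inner_smul_right] at h1
    have h2 : ⟪y, w⟫ ≤ Ta⁻¹ := by
      rw [← one_div, le_div_iff₀ hTa_pos]
      linarith [h1, mul_comm Ta ⟪y, w⟫]
    have h4 : Tb⁻¹ ≤ hb'⁻¹ * ⟪v i, w⟫ := aux_inv hhb_pos hTb_pos keyb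
    have h5 : hb'⁻¹ * ⟪v i, w⟫ ≤ ha'⁻¹ * ⟪v i, w⟫ :=
      mul_le_mul_of_nonneg_right (aux_inv_anti hha_pos hab') hiw.le
    rw [hTaTb'] at h2
    linarith
  · -- Case A: use v j0
    obtain ⟨hha_pos, hρa⟩ := radialFn_polar hvn hβa hm hRa (hvn j0)
    set ha' := sSup ((fun x => ⟪x, v j0⟫) '' ⋂ i, Hminus (βa i) (v i)) with hha'
    have hup : ha' ≤ βa j0 := by
      rw [hha']
      refine csSup_le ⟨_, ⟨0, zero_mem_interHminus hβa, rfl⟩⟩ ?_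
      rintro r ⟨x, hx, rfl⟩
      exact mem_interHminus.mp hx j0
    have hTaval : Ta * ⟪w, v j0⟫ = βa j0 := by
      rw [hj0, div_mul_cancel₀ _ hj0pos.ne']
    have hkeya : ha' ≤ Ta * ⟪v j0, w⟫ := by
      rw [real_inner_comm, hTaval]; exact hup
    refine Set.mem_biUnion (Set.mem_biUnion (show j0 ∈ {j : Fin m | j ∉ I} from hj0I)
      (Set.mem_singleton _)) ?_
    simp only [normalCone, Set.mem_setOf_eq]
    refine ⟨hw1, fun y hy => ?_⟩
    rw [inner_sub_left, hρa]
    simp only [real_inner_smul_left]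
    simp only [polarBody, Set.mem_setOf_eq] at hy
    have h1 := hy _ hTaQ
    rw [real_inner_smul_right] at h1
    have h2 : ⟪y, w⟫ ≤ Ta⁻¹ := by
      rw [← one_div, le_div_iff₀ hTa_pos]
      linarith [h1, mul_comm Ta ⟪y, w⟫]
    have h3 : Ta⁻¹ ≤ ha'⁻¹ * ⟪v j0, w⟫ := aux_inv hha_pos hTa_pos hkeya
    linarith

end Aux

/-- for the partially rescaled polytope
`P_a* = (⋂_{i∈I} H^-(α_i, v_i)) ∩ (⋂_{i∉I} H^-(aα_i, v_i))`, the radial function of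
`P_a*` is the minimum of the rescaled ratios, and the radial Gauss image
`α_{P_a}(⋃_{i∉I}{v_i})` increases as `a` decreases. -/
theorem stmt11 {n m : ℕ} (v : Fin m → E n) (hv : ∀ i, v i ∈ uSphere n)
    (hnc : ¬ InHemisphere (Set.range v))
    (α : Fin m → ℝ) (hα : ∀ i, 0 < α i)
    (I : Finset (Fin m)) (hIne : I.Nonempty) (hIc : Iᶜ.Nonempty) :
    (∀ a : ℝ, 0 < a → a ≤ 1 → ∀ u ∈ uSphere n,
      IsLeast {r : ℝ | ∃ i, 0 < ⟪u, v i⟫ ∧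
          r = (if i ∈ I then α i else a * α i) / ⟪u, v i⟫}
        (radialFn (⋂ i, Hminus (if i ∈ I then α i else a * α i) (v i)) u)) ∧
    (∀ a b : ℝ, 0 < a → a ≤ b → b ≤ 1 →
      rGauss (polarBody (⋂ i, Hminus (if i ∈ I then α i else b * α i) (v i)))
          (⋃ i ∈ {j : Fin m | j ∉ I}, {v i}) ⊆
        rGauss (polarBody (⋂ i, Hminus (if i ∈ I then α i else a * α i) (v i)))
          (⋃ i ∈ {j : Fin m | j ∉ I}, {v i})) := by
  classical
  have hm : (Finset.univ : Finset (Fin m)).Nonempty := by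
    obtain ⟨i0, _⟩ := hIc
    exact ⟨i0, Finset.mem_univ _⟩
  constructor
  · intro a ha ha1 u hu
    have hβ : ∀ i, 0 < (fun i => if i ∈ I then α i else a * α i) i := by
      intro i
      by_cases h : i ∈ I <;> simp [h, hα i, mul_pos ha (hα i)]
    obtain ⟨i0, hi0⟩ := exists_pos_inner hnc hu
    have hJ : (Finset.univ.filter fun i => (0:ℝ) < ⟪u, v i⟫).Nonempty :=
      ⟨i0, Finset.mem_filter.mpr ⟨Finset.mem_univ _, hi0⟩⟩
    have hrad := radialFn_inter (v := v)
      (β := fun i => if i ∈ I then α i else a * α i) hβ u hJ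
    constructor
    · obtain ⟨j, hjJ, hjeq⟩ := Finset.exists_mem_eq_inf' hJ
        (fun i => (if i ∈ I then α i else a * α i) / ⟪u, v i⟫)
      exact ⟨j, (Finset.mem_filter.mp hjJ).2, by rw [hrad, hjeq]⟩
    · rintro r ⟨i, hip, rfl⟩
      rw [hrad]
      exact Finset.inf'_le _ (Finset.mem_filter.mpr ⟨Finset.mem_univ i, hip⟩)
  · intro a b ha hab hb1
    have hb : 0 < b := ha.trans_le hab
    refine part2 v hv hnc I hm (fun i => if i ∈ I then α i else a * α i)
      (fun i => if i ∈ I then α i else b * α i) ?_ ?_ ?_ ?_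
    · intro i; by_cases h : i ∈ I <;> simp [h, hα i, mul_pos ha (hα i)]
    · intro i; by_cases h : i ∈ I <;> simp [h, hα i, mul_pos hb (hα i)]
    · intro i
      by_cases h : i ∈ I <;> simp [h]
      exact mul_le_mul_of_nonneg_right hab (hα i).le
    · intro i hiI; simp [hiI]
end
end
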